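/- Every essential box of a block-monotone permutation lies in the southeast corner of a block: if v ∈ S_d is a permutation whose permutation matrix, relative to a fixed block decomposition, has 1s arranged NW-to-SE within each block row and each block column, then every element of Fulton's essential set Ess(v) is located at a position (p, q) where p is the last row of a block row and q is the last column of a block column. -/

import Mathlib

/-- Cumulative block sizes. -/
def cum (f : ℕ → ℕ) (k : ℕ) : ℕ := ∑ i ∈ Finset.range k, f i

/-- `(i,j)` (0-indexed) is a box of the Rothe diagram of the permutation `σ` of `Fin d`
(viewed as the matrix with a `1` in position `(r, σ r)`): no `1` weakly north in the same
column and no `1` weakly west in the same row, i.e. `j < σ(i)` and `i < σ⁻¹(j)`. -/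
def inDiagram {d : ℕ} (σ : Equiv.Perm (Fin d)) (i j : ℕ) : Prop :=
  ∃ (hi : i < d) (hj : j < d),
    j < (σ ⟨i, hi⟩).val ∧ i < (σ.symm ⟨j, hj⟩).val

/-!
A box `(i, j)` of the diagram with `i + 1` in the same row block as `i` has `σ i < σ (i + 1)`,
so the `1` of row `i + 1` lies east of column `j` as well, and it cannot be the `1` of column
`j`; hence `(i + 1, j)` is again a box and `(i, j)` is not essential. Columns follow by
transposing, which exchanges `σ` with `σ⁻¹`.
-/

lemma cum_mono (f : ℕ → ℕ) : Monotone (cum f) := fun _ _ hab =>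
  Finset.sum_le_sum_of_subset (Finset.range_subset_range.mpr hab)

lemma exists_block_of_lt_cum (f : ℕ → ℕ) {m i : ℕ} (hi : i < cum f m) :
    ∃ a < m, cum f a ≤ i ∧ i < cum f (a + 1) := by
  induction m with
  | zero => simp [cum] at hi
  | succ n ih =>
    by_cases hn : i < cum f n
    · obtain ⟨a, ha, hle, hlt⟩ := ih hn
      exact ⟨a, Nat.lt_succ_of_lt ha, hle, hlt⟩
    · exact ⟨n, n.lt_succ_self, not_lt.mp hn, hi⟩

lemma inDiagram_symm_iff {d : ℕ} (σ : Equiv.Perm (Fin d)) (i j : ℕ) :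
    inDiagram σ.symm j i ↔ inDiagram σ i j := by
  constructor <;> rintro ⟨hj, hi, hσ, hσ'⟩ <;> exact ⟨hi, hj, hσ', hσ⟩

lemma inDiagram_succ_of_lt {d : ℕ} {σ : Equiv.Perm (Fin d)} {i j : ℕ}
    (hbox : inDiagram σ i j) (hi₁ : i + 1 < d)
    (hlt : σ ⟨i, hbox.1⟩ < σ ⟨i + 1, hi₁⟩) : inDiagram σ (i + 1) j := by
  obtain ⟨hi, hj, hσ, hσ'⟩ := hbox
  have hjσ : j < (σ ⟨i + 1, hi₁⟩).val := hσ.trans hlt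
  refine ⟨hi₁, hj, hjσ, lt_of_le_of_ne hσ' fun heq => ?_⟩
  have : σ ⟨i + 1, hi₁⟩ = ⟨j, hj⟩ :=
    (congrArg σ (Fin.ext heq)).trans (σ.apply_symm_apply _)
  simp [this] at hjσ

lemma exists_eq_cum_of_not_inDiagram_succ {m d : ℕ} {h : ℕ → ℕ} (hd : d = cum h m)
    {σ : Equiv.Perm (Fin d)}
    (mono_row : ∀ (i : ℕ) (r r' : Fin d), i < m →
      cum h i ≤ r.val → r'.val < cum h (i + 1) → r < r' → σ r < σ r')
    {i j : ℕ} (hbox : inDiagram σ i j) (hsouth : ¬ inDiagram σ (i + 1) j) :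
    ∃ a < m, i + 1 = cum h (a + 1) := by
  obtain ⟨a, ham, hle, hlt⟩ := exists_block_of_lt_cum h (hd ▸ hbox.1)
  refine ⟨a, ham, le_antisymm hlt (not_lt.mp fun hin => hsouth ?_)⟩
  have hi₁ : i + 1 < d := hd ▸ hin.trans_le (cum_mono h ham)
  exact inDiagram_succ_of_lt hbox hi₁ <|
    mono_row a _ _ ham hle hin (Fin.mk_lt_mk.mpr i.lt_succ_self)

/-- every essential box of a block-monotone permutation lies in the
southeast corner of a block: if the permutation matrix of `σ ∈ S_d`, relative to a block
decomposition into `m` consecutive row blocks of heights `h` and column blocks of widths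
`w`, has its `1`s arranged NW-to-SE within each block row and each block column, then
every member `(i,j)` of Fulton's essential set (a diagram box whose south and east
neighbours are not diagram boxes) has `i` the last row of a block row and `j` the last
column of a block column. -/
theorem stmt10 (m d : ℕ) (h w : ℕ → ℕ)
    (hd : d = cum h m) (hw : d = cum w m)
    (σ : Equiv.Perm (Fin d))
    (mono_row : ∀ (i : ℕ) (r r' : Fin d), i < m →
      cum h i ≤ r.val → r'.val < cum h (i + 1) → r < r' → σ r < σ r')
    (mono_col : ∀ (j : ℕ) (c c' : Fin d), j < m →
      cum w j ≤ c.val → c'.val < cum w (j + 1) → c < c' → σ.symm c < σ.symm c')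
    (i j : ℕ)
    (hbox : inDiagram σ i j)
    (hsouth : ¬ inDiagram σ (i + 1) j)
    (heast : ¬ inDiagram σ i (j + 1)) :
    (∃ a < m, i + 1 = cum h (a + 1)) ∧ (∃ c < m, j + 1 = cum w (c + 1)) :=
  ⟨exists_eq_cum_of_not_inDiagram_succ hd mono_row hbox hsouth,
    exists_eq_cum_of_not_inDiagram_succ hw mono_col ((inDiagram_symm_iff σ i j).mpr hbox)
      (by rwa [inDiagram_symm_iff])⟩
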